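/- Let S be a distributive inverse semigroup and a, b ∈ S with b ≰ a. Then there exists a prime filter of S containing b and not containing a. -/

import Mathlib

namespace InvPaper

/-- An inverse semigroup: a regular semigroup whose idempotents commute
(equivalently, each element has a unique generalized inverse `sinv`). -/
class InverseSemigroup (S : Type*) extends Semigroup S where
  sinv : S → S
  mul_sinv_mul : ∀ a : S, a * sinv a * a = a
  sinv_mul_sinv : ∀ a : S, sinv a * a * sinv a = sinv a
  idem_comm : ∀ e f : S, e * e = e → f * f = f → e * f = f * e

open InverseSemigroup

variable {S : Type*}

section Basic
variable [InverseSemigroup S]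

/-- `e` is an idempotent. -/
def idem (e : S) : Prop := e * e = e

/-- The natural partial order: `a ≤ b` iff `a = b * e` for some idempotent `e`. -/
def nle (a b : S) : Prop := ∃ e : S, idem e ∧ a = b * e

/-- `s` and `t` are compatible: `s⁻¹t` and `st⁻¹` are idempotents. -/
def compatible (s t : S) : Prop := idem (sinv s * t) ∧ idem (s * sinv t)

/-- `j` is the join (least upper bound) of `a` and `b` w.r.t. the natural partial order. -/
def isJoin (a b j : S) : Prop :=
  nle a j ∧ nle b j ∧ ∀ c : S, nle a c → nle b c → nle j c

/-- `m` is the meet (greatest lower bound) of `a` and `b`. -/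
def isMeet (a b m : S) : Prop :=
  nle m a ∧ nle m b ∧ ∀ z : S, nle z a → nle z b → nle z m

/-- `j` is the least upper bound of the set `A`. -/
def isJoinSet (A : Set S) (j : S) : Prop :=
  (∀ a ∈ A, nle a j) ∧ ∀ c : S, (∀ a ∈ A, nle a c) → nle j c

/-- A filter: a nonempty, downward-directed, upward-closed subset. -/
def IsFilter (F : Set S) : Prop :=
  F.Nonempty ∧ (∀ a ∈ F, ∀ b ∈ F, ∃ c ∈ F, nle c a ∧ nle c b) ∧
    ∀ a ∈ F, ∀ b : S, nle a b → b ∈ F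

/-- An order ideal: a downward-closed subset. -/
def IsOrderIdeal (A : Set S) : Prop := ∀ x ∈ A, ∀ y : S, nle y x → y ∈ A

end Basic

/-- An inverse semigroup with a (multiplicative) zero element. -/
class InverseSemigroupWithZero (S : Type*) extends InverseSemigroup S, Zero S where
  zmul : ∀ a : S, 0 * a = 0
  mulz : ∀ a : S, a * 0 = 0

section WithZero
variable [InverseSemigroupWithZero S]

/-- A proper filter: a filter not containing `0`. -/
def IsProperFilter (F : Set S) : Prop := IsFilter F ∧ (0 : S) ∉ F

/-- An ultrafilter: a maximal proper filter. -/
def IsUltrafilter (F : Set S) : Prop :=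
  IsProperFilter F ∧ ∀ G : Set S, IsProperFilter G → F ⊆ G → G = F

/-- A prime filter: a proper filter `F` such that whenever a join `a ∨ b` exists and
lies in `F`, then `a ∈ F` or `b ∈ F`. -/
def IsPrimeFilter (F : Set S) : Prop :=
  IsProperFilter F ∧ ∀ a b j : S, isJoin a b j → j ∈ F → a ∈ F ∨ b ∈ F

/-- `d(F) = (F⁻¹F)↑`, the upward closure of `{a⁻¹b : a, b ∈ F}`. -/
def dClosure (F : Set S) : Set S :=
  {x | ∃ a ∈ F, ∃ b ∈ F, nle (InverseSemigroup.sinv a * b) x}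

/-- `r(F) = (FF⁻¹)↑`, the upward closure of `{ab⁻¹ : a, b ∈ F}`. -/
def rClosure (F : Set S) : Set S :=
  {x | ∃ a ∈ F, ∃ b ∈ F, nle (a * InverseSemigroup.sinv b) x}

/-- The product of two filters: `F · G = (FG)↑`. -/
def filterMul (F G : Set S) : Set S :=
  {x | ∃ a ∈ F, ∃ b ∈ G, nle (a * b) x}

/-- `A` is ∨-closed: closed under existing joins of finite nonempty compatible subsets. -/
def IsVeeClosed (A : Set S) : Prop :=
  ∀ Y : Finset S, Y.Nonempty → ↑Y ⊆ A → (∀ a ∈ Y, ∀ b ∈ Y, compatible a b) →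
    ∀ j : S, isJoinSet (↑Y : Set S) j → j ∈ A

/-- The ∨-closure `A^∨`: all existing joins of finite nonempty compatible subsets of `A`. -/
def veeClosure (A : Set S) : Set S :=
  {x | ∃ Y : Finset S, Y.Nonempty ∧ ↑Y ⊆ A ∧ (∀ a ∈ Y, ∀ b ∈ Y, compatible a b) ∧
    isJoinSet (↑Y : Set S) x}

/-- A prime order ideal: if every common lower bound of `a` and `b` lies in `P`,
then `a ∈ P` or `b ∈ P`. -/
def IsPrimeOrderIdeal (P : Set S) : Prop :=
  ∀ a b : S, (∀ z : S, nle z a → nle z b → z ∈ P) → a ∈ P ∨ b ∈ P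

/-- The set of prime filters containing `s`. -/
def Xset (s : S) : Set (Set S) := {F | IsPrimeFilter F ∧ s ∈ F}

end WithZero

/-- A distributive inverse semigroup: compatible pairs have joins and
multiplication distributes over these joins. -/
class DistributiveInverseSemigroup (S : Type*) extends InverseSemigroupWithZero S where
  joins_exist : ∀ a b : S, compatible a b → ∃ j : S, isJoin a b j
  mul_distrib_left : ∀ a b j c : S, compatible a b → isJoin a b j →
    isJoin (c * a) (c * b) (c * j)
  mul_distrib_right : ∀ a b j c : S, compatible a b → isJoin a b j →
    isJoin (a * c) (b * c) (j * c)

/-- A distributive inverse semigroup is Boolean if its idempotents form a generalized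
Boolean algebra: relative complements of idempotents exist. -/
def IsBoolean (S : Type*) [DistributiveInverseSemigroup S] : Prop :=
  ∀ e f : S, idem e → idem f → nle e f →
    ∃ g : S, idem g ∧ e * g = 0 ∧ isJoin e g f

/-- A pseudogroup: an inverse semigroup with joins of all nonempty compatible subsets,
over which multiplication distributes. -/
class Pseudogroup (S : Type*) extends InverseSemigroup S where
  joins_exist : ∀ A : Set S, A.Nonempty → (∀ a ∈ A, ∀ b ∈ A, compatible a b) →
    ∃ j : S, isJoinSet A j
  mul_distrib_left : ∀ (A : Set S) (j c : S), isJoinSet A j →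
    isJoinSet ((c * ·) '' A) (c * j)
  mul_distrib_right : ∀ (A : Set S) (j c : S), isJoinSet A j →
    isJoinSet ((· * c) '' A) (j * c)

/-!
A filter `F ∋ b` maximal among filters containing no element below `a` exists by Zorn's lemma,
starting from the principal filter of `b`. It is prime: if a join `x ∨ y` lies in `F` but
`x, y ∉ F`, maximality forces, for `w = x` and `w = y`, some `f_w ∈ F` such that every common
lower bound of `w` and `f_w` lies below `a`. Taking `f = (x ∨ y) e ∈ F` below `f_x` and `f_y`,
distributivity gives `f = x e ∨ y e`, and both `x e` and `y e` lie below `a`; so `f ≤ a`,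
a contradiction.
-/

section InverseSemigroup
variable [InverseSemigroup S]

lemma idem_sinv_mul (a : S) : idem (sinv a * a) := by
  calc sinv a * a * (sinv a * a) = sinv a * (a * sinv a * a) := by simp only [mul_assoc]
    _ = sinv a * a := by rw [mul_sinv_mul]

lemma idem_mul_sinv (a : S) : idem (a * sinv a) := by
  calc a * sinv a * (a * sinv a) = a * sinv a * a * sinv a := by simp only [mul_assoc]
    _ = a * sinv a := by rw [mul_sinv_mul]

lemma idem.mul {e f : S} (he : idem e) (hf : idem f) : idem (e * f) := by
  calc e * f * (e * f) = e * (f * e) * f := by simp only [mul_assoc]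
    _ = e * (e * f) * f := by rw [idem_comm e f he hf]
    _ = e * e * (f * f) := by simp only [mul_assoc]
    _ = e * f := by rw [he, hf]

lemma idem.conj {e : S} (he : idem e) (c : S) : idem (c * e * sinv c) := by
  calc c * e * sinv c * (c * e * sinv c) = c * (e * (sinv c * c)) * e * sinv c := by
        simp only [mul_assoc]
    _ = c * (sinv c * c * e) * e * sinv c := by rw [idem_comm e _ he (idem_sinv_mul c)]
    _ = c * sinv c * c * (e * e) * sinv c := by simp only [mul_assoc]
    _ = c * e * sinv c := by rw [he, mul_sinv_mul]

lemma nle_refl (a : S) : nle a a :=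
  ⟨sinv a * a, idem_sinv_mul a, by rw [← mul_assoc, mul_sinv_mul]⟩

lemma nle_trans {a b c : S} (hab : nle a b) (hbc : nle b c) : nle a c := by
  obtain ⟨e, he, rfl⟩ := hab
  obtain ⟨f, hf, rfl⟩ := hbc
  exact ⟨f * e, hf.mul he, mul_assoc c f e⟩

lemma mul_idem_nle_self {a e : S} (he : idem e) : nle (a * e) a := ⟨e, he, rfl⟩

lemma nle.mul_idem {a b e : S} (hab : nle a b) (he : idem e) : nle (a * e) (b * e) := by
  obtain ⟨f, hf, rfl⟩ := hab
  exact ⟨f, hf, by rw [mul_assoc, idem_comm f e hf he, ← mul_assoc]⟩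

lemma eq_sinv_of_inverse {a x : S} (h₁ : a * x * a = a) (h₂ : x * a * x = x) :
    x = sinv a := by
  have hax : idem (a * x) := by unfold idem; rw [← mul_assoc, h₁]
  have hxa : idem (x * a) := by unfold idem; rw [← mul_assoc, h₂]
  calc x = x * a * x := h₂.symm
    _ = x * (a * sinv a * (a * x)) := by
        rw [← mul_assoc (a * sinv a), mul_sinv_mul]; simp only [mul_assoc]
    _ = x * (a * x * (a * sinv a)) := by rw [idem_comm _ _ (idem_mul_sinv a) hax]
    _ = x * a * x * a * sinv a := by simp only [mul_assoc]
    _ = x * a * (sinv a * a * sinv a) := by rw [h₂, sinv_mul_sinv]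
    _ = x * a * (sinv a * a) * sinv a := by simp only [mul_assoc]
    _ = sinv a * a * (x * a) * sinv a := by rw [idem_comm _ _ hxa (idem_sinv_mul a)]
    _ = sinv a * (a * x * a) * sinv a := by simp only [mul_assoc]
    _ = sinv a := by rw [h₁, sinv_mul_sinv]

lemma sinv_of_idem {e : S} (he : idem e) : sinv e = e :=
  (eq_sinv_of_inverse (by rw [he, he]) (by rw [he, he])).symm

lemma sinv_mul (a b : S) : sinv (a * b) = sinv b * sinv a := by
  have hcomm := idem_comm _ _ (idem_mul_sinv b) (idem_sinv_mul a)
  refine (eq_sinv_of_inverse ?_ ?_).symm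
  · calc a * b * (sinv b * sinv a) * (a * b) = a * (b * sinv b * (sinv a * a)) * b := by
          simp only [mul_assoc]
      _ = a * sinv a * a * (b * sinv b * b) := by rw [hcomm]; simp only [mul_assoc]
      _ = a * b := by rw [mul_sinv_mul, mul_sinv_mul]
  · calc sinv b * sinv a * (a * b) * (sinv b * sinv a)
          = sinv b * (sinv a * a * (b * sinv b)) * sinv a := by simp only [mul_assoc]
      _ = sinv b * b * sinv b * (sinv a * a * sinv a) := by rw [← hcomm]; simp only [mul_assoc]
      _ = sinv b * sinv a := by rw [sinv_mul_sinv, sinv_mul_sinv]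

lemma compatible_of_nle {x y c : S} (hx : nle x c) (hy : nle y c) : compatible x y := by
  obtain ⟨e, he, rfl⟩ := hx
  obtain ⟨f, hf, rfl⟩ := hy
  constructor
  · show idem (sinv (c * e) * (c * f))
    rw [sinv_mul, sinv_of_idem he,
      show e * sinv c * (c * f) = e * (sinv c * c * f) by simp only [mul_assoc]]
    exact he.mul ((idem_sinv_mul c).mul hf)
  · show idem (c * e * sinv (c * f))
    rw [sinv_mul, sinv_of_idem hf,
      show c * e * (f * sinv c) = c * (e * f) * sinv c by simp only [mul_assoc]]
    exact (he.mul hf).conj c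

lemma exists_isMeet_of_nle {u v j : S} (hu : nle u j) (hv : nle v j) : ∃ m, isMeet u v m := by
  obtain ⟨e, he, rfl⟩ := hu
  obtain ⟨f, hf, rfl⟩ := hv
  refine ⟨j * e * f, mul_idem_nle_self hf, ⟨e, he, ?_⟩, ?_⟩
  · rw [mul_assoc, idem_comm e f he hf, ← mul_assoc]
  · rintro z ⟨g, hg, rfl⟩ ⟨g', hg', hz⟩
    refine ⟨g, hg, ?_⟩
    have hzf : j * e * g * f = j * e * g := by
      rw [hz, mul_assoc (j * f), idem_comm g' f hg' hf, ← mul_assoc, mul_assoc j, hf]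
    calc j * e * g = j * e * g * f := hzf.symm
      _ = j * e * f * g := by rw [mul_assoc _ g f, idem_comm g f hg hf]; simp only [mul_assoc]

end InverseSemigroup

section Filters
variable [InverseSemigroup S]

lemma isFilter_principal (b : S) : IsFilter {z | nle b z} :=
  ⟨⟨b, nle_refl b⟩, fun _ hx _ hy => ⟨b, nle_refl b, hx, hy⟩,
    fun _ hx _ hxy => nle_trans hx hxy⟩

lemma IsFilter.sUnion_of_isChain {c : Set (Set S)} (hc : ∀ F ∈ c, IsFilter F)
    (hchain : IsChain (· ⊆ ·) c) (hne : c.Nonempty) : IsFilter (⋃₀ c) := by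
  obtain ⟨F₀, hF₀⟩ := hne
  refine ⟨(hc F₀ hF₀).1.mono (Set.subset_sUnion_of_mem hF₀), ?_, ?_⟩
  · rintro x ⟨F₁, hF₁, hx⟩ y ⟨F₂, hF₂, hy⟩
    obtain ⟨F, hF, hxF, hyF⟩ : ∃ F ∈ c, x ∈ F ∧ y ∈ F := by
      rcases hchain.total hF₁ hF₂ with h₁₂ | h₂₁
      · exact ⟨F₂, hF₂, h₁₂ hx, hy⟩
      · exact ⟨F₁, hF₁, hx, h₂₁ hy⟩
    obtain ⟨z, hz, hzx, hzy⟩ := (hc F hF).2.1 x hxF y hyF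
    exact ⟨z, ⟨F, hF, hz⟩, hzx, hzy⟩
  · rintro x ⟨F, hF, hx⟩ y hxy
    exact ⟨F, hF, (hc F hF).2.2 x hx y hxy⟩

/-- The filter generated by a filter `F` and an element `w` below some member of `F`. -/
def adjoin (F : Set S) (w : S) : Set S := {z | ∃ f ∈ F, ∃ m, isMeet w f m ∧ nle m z}

variable {F : Set S} {w j : S}

lemma subset_adjoin (hF : IsFilter F) (hj : j ∈ F) (hwj : nle w j) : F ⊆ adjoin F w := by
  intro f hf
  obtain ⟨f', hf', hf'f, hf'j⟩ := hF.2.1 f hf j hj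
  obtain ⟨m, hm⟩ := exists_isMeet_of_nle hwj hf'j
  exact ⟨f', hf', m, hm, nle_trans hm.2.1 hf'f⟩

lemma mem_adjoin (hj : j ∈ F) (hwj : nle w j) : w ∈ adjoin F w :=
  ⟨j, hj, w, ⟨nle_refl w, hwj, fun _ hzw _ => hzw⟩, nle_refl w⟩

lemma isFilter_adjoin (hF : IsFilter F) (hj : j ∈ F) (hwj : nle w j) :
    IsFilter (adjoin F w) := by
  refine ⟨⟨w, mem_adjoin hj hwj⟩, ?_, ?_⟩
  · rintro z₁ ⟨f₁, hf₁, m₁, hm₁, hmz₁⟩ z₂ ⟨f₂, hf₂, m₂, hm₂, hmz₂⟩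
    obtain ⟨g, hg, hgf₁, hgf₂⟩ := hF.2.1 f₁ hf₁ f₂ hf₂
    obtain ⟨f, hf, hfg, hfj⟩ := hF.2.1 g hg j hj
    obtain ⟨m, hm⟩ := exists_isMeet_of_nle hwj hfj
    have hmg : nle m g := nle_trans hm.2.1 hfg
    exact ⟨m, ⟨f, hf, m, hm, nle_refl m⟩,
      nle_trans (hm₁.2.2 m hm.1 (nle_trans hmg hgf₁)) hmz₁,
      nle_trans (hm₂.2.2 m hm.1 (nle_trans hmg hgf₂)) hmz₂⟩
  · rintro z ⟨f, hf, m, hm, hmz⟩ v hzv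
    exact ⟨f, hf, m, hm, nle_trans hmz hzv⟩

def IsFilterAvoiding (a : S) (F : Set S) : Prop := IsFilter F ∧ ∀ x ∈ F, ¬ nle x a

lemma exists_maximal_isFilterAvoiding {a b : S} (hba : ¬ nle b a) :
    ∃ F, b ∈ F ∧ Maximal (IsFilterAvoiding a) F := by
  have hb : IsFilterAvoiding a {z | nle b z} :=
    ⟨isFilter_principal b, fun x hbx hxa => hba (nle_trans hbx hxa)⟩
  obtain ⟨F, hbF, hF⟩ := zorn_subset_nonempty {F | IsFilterAvoiding a F}
    (fun c hc hchain hne => ⟨⋃₀ c,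
      ⟨IsFilter.sUnion_of_isChain (fun F hF => (hc hF).1) hchain hne,
        fun _ ⟨F, hF, hx⟩ => (hc hF).2 _ hx⟩,
      fun _ => Set.subset_sUnion_of_mem⟩) _ hb
  exact ⟨F, hbF (nle_refl b), hF⟩

lemma exists_lowerBounds_nle_of_maximal {a : S} (hF : Maximal (IsFilterAvoiding a) F)
    (hj : j ∈ F) (hwj : nle w j) (hwF : w ∉ F) :
    ∃ f ∈ F, ∀ z, nle z w → nle z f → nle z a := by
  have hsub := subset_adjoin hF.1.1 hj hwj
  have hnot : ¬ IsFilterAvoiding a (adjoin F w) := fun hG =>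
    hwF (hF.eq_of_subset hG hsub ▸ mem_adjoin hj hwj)
  obtain ⟨u, ⟨f, hf, m, hm, hmu⟩, hua⟩ : ∃ u ∈ adjoin F w, nle u a := by
    simpa [IsFilterAvoiding, isFilter_adjoin hF.1.1 hj hwj] using hnot
  exact ⟨f, hf, fun z hzw hzf => nle_trans (hm.2.2 z hzw hzf) (nle_trans hmu hua)⟩

end Filters

lemma isPrimeFilter_of_maximal [DistributiveInverseSemigroup S] {a : S} {F : Set S}
    (hF : Maximal (IsFilterAvoiding a) F) : IsPrimeFilter F := by
  obtain ⟨hFilter, hFa⟩ := hF.1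
  refine ⟨⟨hFilter, fun h0 => hFa 0 h0 ⟨0, InverseSemigroupWithZero.zmul 0,
    (InverseSemigroupWithZero.mulz a).symm⟩⟩, fun x y j hjoin hj => ?_⟩
  by_contra! hxy
  obtain ⟨fx, hfx, hx⟩ := exists_lowerBounds_nle_of_maximal hF hj hjoin.1 hxy.1
  obtain ⟨fy, hfy, hy⟩ := exists_lowerBounds_nle_of_maximal hF hj hjoin.2.1 hxy.2
  obtain ⟨g, hg, hgx, hgy⟩ := hFilter.2.1 fx hfx fy hfy
  obtain ⟨f, hf, hfg, e, he, rfl⟩ := hFilter.2.1 g hg j hj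
  have hjoin' := DistributiveInverseSemigroup.mul_distrib_right x y j e
    (compatible_of_nle hjoin.1 hjoin.2.1) hjoin
  have hxa : nle (x * e) a :=
    hx _ (mul_idem_nle_self he) (nle_trans (hjoin.1.mul_idem he) (nle_trans hfg hgx))
  have hya : nle (y * e) a :=
    hy _ (mul_idem_nle_self he) (nle_trans (hjoin.2.1.mul_idem he) (nle_trans hfg hgy))
  exact hFa _ hf (hjoin'.2.2 a hxa hya)

/-- In a distributive inverse semigroup, if `b ≰ a` then there is a
prime filter containing `b` but not `a`. -/
theorem stmt12 {S : Type*} [DistributiveInverseSemigroup S] (a b : S)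
    (h : ¬ nle b a) :
    ∃ F : Set S, IsPrimeFilter F ∧ b ∈ F ∧ a ∉ F := by
  obtain ⟨F, hbF, hF⟩ := exists_maximal_isFilterAvoiding h
  exact ⟨F, isPrimeFilter_of_maximal hF, hbF, fun haF => hF.1.2 a haF (nle_refl a)⟩

end InvPaper
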